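/- arXiv:2306.01271 — 4 statements merged into one kernel-verified Lean document; each statement's English description precedes it below -/
import Mathlib

section
/- Let $(z^{(t)})_{t=0}^{T}$ be a positive real sequence satisfying $z^{(t+1)} \geq z^{(t)} + m (z^{(t)})^2$ and $z^{(t+1)} \leq z^{(t)} + M (z^{(t)})^2$ for all $t$, with constants $0 < m \leq M$ and initialization $z^{(0)} > 0$. Let $v > 0$ with $z^{(0)} \leq v$. Then for every $t \geq t_0 := \lceil 3/(m z^{(0)}) \rceil + \lceil (8M/m) \cdot \lceil \log(v/z^{(0)})/\log 2 \rceil \rceil$ (with $t \leq T$), one has $z^{(t)} \geq v$. -/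
/-- Auxiliary step count for the tensor power method lemma. -/
noncomputable def tpmN (m z0 : ℝ) : ℕ → ℕ
  | 0 => 0
  | k + 1 => tpmN m z0 k + ⌈1 / (m * (2 ^ k * z0))⌉₊

lemma tpmN_zero (m z0 : ℝ) : tpmN m z0 0 = 0 := rfl

lemma tpmN_succ (m z0 : ℝ) (k : ℕ) :
    tpmN m z0 (k + 1) = tpmN m z0 k + ⌈1 / (m * (2 ^ k * z0))⌉₊ := rfl

/-- Tensor power method (Lemma: lower-bounded quadratic growth reaches threshold). -/
theorem tensor_power_method_reach
    (T : ℕ) (z : ℕ → ℝ) (m M v : ℝ)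
    (hm : 0 < m) (hmM : m ≤ M)
    (hpos : ∀ t ≤ T, 0 < z t)
    (hlow : ∀ t < T, z t + m * (z t) ^ 2 ≤ z (t + 1))
    (hup : ∀ t < T, z (t + 1) ≤ z t + M * (z t) ^ 2)
    (hv : 0 < v) (hzv : z 0 ≤ v) :
    ∀ t, ⌈3 / (m * z 0)⌉₊ +
        ⌈(8 * M / m) * (⌈Real.log (v / z 0) / Real.log 2⌉₊ : ℝ)⌉₊ ≤ t →
      t ≤ T → v ≤ z t := by
  intro t ht htT
  have hz0 : 0 < z 0 := hpos 0 (Nat.zero_le T)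
  have hmz0 : 0 < m * z 0 := mul_pos hm hz0
  -- monotonicity
  have hstep : ∀ u < T, z u ≤ z (u + 1) := by
    intro u hu
    have h1 := hlow u hu
    have h2 : 0 < z u := hpos u hu.le
    nlinarith [sq_nonneg (z u)]
  have hmono : ∀ s k, s + k ≤ T → z s ≤ z (s + k) := by
    intro s k
    induction k with
    | zero => intro _; exact le_rfl
    | succ n ih =>
      intro h
      have h1 : s + n ≤ T := by omega
      have h2 : s + n < T := by omega
      calc z s ≤ z (s + n) := ih h1
        _ ≤ z (s + n + 1) := hstep (s + n) h2
  -- doubling lemma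
  have hdouble : ∀ s x, 0 < x → x ≤ z s → ∀ k, s + k ≤ T →
      min (2 * x) (x + (k : ℝ) * (m * x ^ 2)) ≤ z (s + k) := by
    intro s x hx hxs k
    induction k with
    | zero =>
      intro _
      refine le_trans (min_le_right _ _) ?_
      simpa using hxs
    | succ n ih =>
      intro h
      have h1 : s + n ≤ T := by omega
      have h2 : s + n < T := by omega
      have ihn := ih h1
      rcases le_or_gt (2 * x) (z (s + n)) with hc | hc
      · have := hstep (s + n) h2
        exact le_trans (min_le_left _ _) (le_trans hc this)
      · have hmin : x + (n : ℝ) * (m * x ^ 2) ≤ z (s + n) := by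
          rcases min_cases (2 * x) (x + (n : ℝ) * (m * x ^ 2)) with ⟨he, _⟩ | ⟨he, _⟩
          · rw [he] at ihn; linarith
          · rw [he] at ihn; exact ihn
        have hxz : x ≤ z (s + n) := by
          nlinarith [mul_nonneg (mul_nonneg hm.le (sq_nonneg x)) (Nat.cast_nonneg n : (0:ℝ) ≤ n)]
        have hgrow := hlow (s + n) h2
        have hsq : m * x ^ 2 ≤ m * z (s + n) ^ 2 := by
          apply mul_le_mul_of_nonneg_left _ hm.le
          exact pow_le_pow_left₀ hx.le hxz 2
        have hfin : x + ((n : ℝ) + 1) * (m * x ^ 2) ≤ z (s + n + 1) := by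
          nlinarith
        refine le_trans (min_le_right _ _) ?_
        push_cast
        exact hfin
  -- one doubling in ⌈1/(m x)⌉ steps
  have hstep2 : ∀ s x, 0 < x → x ≤ z s → s + ⌈1 / (m * x)⌉₊ ≤ T →
      2 * x ≤ z (s + ⌈1 / (m * x)⌉₊) := by
    intro s x hx hxs hT
    have hn : (1 : ℝ) / (m * x) ≤ (⌈1 / (m * x)⌉₊ : ℝ) := Nat.le_ceil _
    have hmx : 0 < m * x := mul_pos hm hx
    have hd := hdouble s x hx hxs _ hT
    have h2x : 2 * x ≤ x + (⌈1 / (m * x)⌉₊ : ℝ) * (m * x ^ 2) := by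
      have hmul : (1 / (m * x)) * (m * x ^ 2) ≤ (⌈1 / (m * x)⌉₊ : ℝ) * (m * x ^ 2) := by
        apply mul_le_mul_of_nonneg_right hn
        positivity
      have heq : (1 / (m * x)) * (m * x ^ 2) = x := by field_simp
      rw [heq] at hmul
      linarith
    exact le_trans (le_min le_rfl h2x) hd
  -- reaching lemma
  set K := ⌈Real.log (v / z 0) / Real.log 2⌉₊ with hK
  have hreach : ∀ k, tpmN m (z 0) k ≤ T → 2 ^ k * z 0 ≤ z (tpmN m (z 0) k) := by
    intro k
    induction k with
    | zero => intro _; simp [tpmN_zero]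
    | succ n ih =>
      intro h
      have h1 : tpmN m (z 0) n ≤ T := by
        have : tpmN m (z 0) n ≤ tpmN m (z 0) (n + 1) := by rw [tpmN_succ]; omega
        omega
      have hx : (0 : ℝ) < 2 ^ n * z 0 := by positivity
      have hs := hstep2 (tpmN m (z 0) n) (2 ^ n * z 0) hx (ih h1) (by rw [← tpmN_succ]; exact h)
      calc (2 : ℝ) ^ (n + 1) * z 0 = 2 * (2 ^ n * z 0) := by ring
        _ ≤ _ := by rw [tpmN_succ]; exact hs
  -- bound on tpmN
  have key : ∀ k, (tpmN m (z 0) k : ℝ) ≤ (2 - 2 / 2 ^ k) / (m * z 0) + k := by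
    intro k
    induction k with
    | zero => simp [tpmN_zero]
    | succ n ih =>
      have hc : (⌈1 / (m * (2 ^ n * z 0))⌉₊ : ℝ) ≤ 1 / (m * (2 ^ n * z 0)) + 1 :=
        le_of_lt (Nat.ceil_lt_add_one (by positivity))
      have hrec : (tpmN m (z 0) (n + 1) : ℝ)
          = (tpmN m (z 0) n : ℝ) + (⌈1 / (m * (2 ^ n * z 0))⌉₊ : ℝ) := by
        rw [tpmN_succ]; push_cast; ring
      rw [hrec]
      have heq : 1 / (m * (2 ^ n * z 0)) = (1 / 2 ^ n) / (m * z 0) := by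
        field_simp
      have h2n : (0:ℝ) < 2 ^ n := by positivity
      have hsum : (2 - 2 / 2 ^ n) / (m * z 0) + (1 / 2 ^ n) / (m * z 0)
          = (2 - 2 / 2 ^ (n + 1)) / (m * z 0) := by
        rw [← add_div]
        congr 1
        rw [pow_succ]
        field_simp
        ring
      push_cast
      linarith [ih, hc, heq, hsum]
  have hNbound : (tpmN m (z 0) K : ℝ) ≤ 2 / (m * z 0) + K := by
    have h2k : (0:ℝ) ≤ 2 / 2 ^ K := by positivity
    have hdd : (2 - 2 / 2 ^ K) / (m * z 0) ≤ 2 / (m * z 0) := by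
      gcongr
      linarith
    linarith [key K]
  -- N ≤ t
  have hNt : tpmN m (z 0) K ≤ t := by
    have h1 : (3 : ℝ) / (m * z 0) ≤ (⌈3 / (m * z 0)⌉₊ : ℝ) := Nat.le_ceil _
    have h2 : ((K : ℝ)) ≤ (⌈(8 * M / m) * (K : ℝ)⌉₊ : ℝ) := by
      refine le_trans ?_ (Nat.le_ceil _)
      have h8 : (1 : ℝ) ≤ 8 * M / m := by
        rw [le_div_iff₀ hm]
        nlinarith
      nlinarith [(Nat.cast_nonneg K : (0:ℝ) ≤ (K:ℝ)), h8]
    have hcast : (tpmN m (z 0) K : ℝ) ≤ ((⌈3 / (m * z 0)⌉₊ +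
        ⌈(8 * M / m) * (K : ℝ)⌉₊ : ℕ) : ℝ) := by
      push_cast
      have : (2:ℝ) / (m * z 0) ≤ 3 / (m * z 0) := by gcongr; norm_num
      linarith [hNbound]
    exact le_trans (Nat.cast_le.mp hcast) ht
  have hNT : tpmN m (z 0) K ≤ T := le_trans hNt htT
  -- 2^K * z0 ≥ v
  have hKv : v ≤ 2 ^ K * z 0 := by
    have hlog : Real.log (v / z 0) / Real.log 2 ≤ (K : ℝ) := Nat.le_ceil _
    have hlog2 : (0:ℝ) < Real.log 2 := Real.log_pos (by norm_num)
    have h1 : Real.log (v / z 0) ≤ (K : ℝ) * Real.log 2 := by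
      rw [div_le_iff₀ hlog2] at hlog
      exact hlog
    have h2 : Real.log (v / z 0) ≤ Real.log ((2:ℝ) ^ K) := by
      rw [Real.log_pow]
      exact h1
    have hvz : (0:ℝ) < v / z 0 := by positivity
    have h3 : v / z 0 ≤ (2:ℝ) ^ K :=
      (Real.log_le_log_iff hvz (by positivity)).mp h2
    rw [div_le_iff₀ hz0] at h3
    linarith [h3]
  have hzN : v ≤ z (tpmN m (z 0) K) := le_trans hKv (hreach K hNT)
  -- monotone to t
  have : z (tpmN m (z 0) K) ≤ z t := by
    have := hmono (tpmN m (z 0) K) (t - tpmN m (z 0) K) (by omega)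
    rwa [Nat.add_sub_cancel' hNt] at this
  linarith
end

section
/- Let $(z^{(t)})_{t=0}^{T}$ be a positive sequence satisfying $z^{(0)} + A\sum_{s=0}^{t-1}(z^{(s)})^2 - C \leq z^{(t)} \leq z^{(0)} + A\sum_{s=0}^{t-1}(z^{(s)})^2 + C$ for all $t$, where $A, C > 0$ and $C \leq z^{(0)}/2$. Let $v \geq z^{(0)}$. Then there is a time $t \leq 8\lceil \log(v/z^{(0)})/\log 2 \rceil + 21/(z^{(0)} A)$ at which $z^{(t)} \geq v$. -/
/-- Perturbed tensor power method: cumulative quadratic growth known up to an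
additive error `C ≤ z 0 / 2` still reaches any threshold `v` in time
`8⌈log(v/z0)/log 2⌉ + 21/(z0 A)`. -/
theorem perturbed_tensor_power_method
    (z : ℕ → ℝ) (A C v : ℝ)
    (hA : 0 < A) (hC : 0 < C)
    (hpos : ∀ t, 0 < z t)
    (hlow : ∀ t, z 0 + A * (∑ s ∈ Finset.range t, (z s) ^ 2) - C ≤ z t)
    (hup : ∀ t, z t ≤ z 0 + A * (∑ s ∈ Finset.range t, (z s) ^ 2) + C)
    (hChalf : C ≤ z 0 / 2) (hv : z 0 ≤ v) :
    ∃ t : ℕ, (t : ℝ) ≤ 8 * (⌈Real.log (v / z 0) / Real.log 2⌉₊ : ℝ) + 21 / (z 0 * A) ∧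
      v ≤ z t := by
  have hz0 : 0 < z 0 := hpos 0
  set w : ℕ → ℝ := fun t => z 0 / 2 + A * ∑ s ∈ Finset.range t, (z s) ^ 2 with hw
  have hwz : ∀ t, w t ≤ z t := by
    intro t
    have := hlow t
    simp only [hw]
    linarith
  have hwmono : ∀ t m : ℕ, w t ≤ w (t + m) := by
    intro t m
    simp only [hw]
    have hsum : (∑ s ∈ Finset.range t, (z s) ^ 2) ≤ ∑ s ∈ Finset.range (t + m), (z s) ^ 2 := by
      apply Finset.sum_le_sum_of_subset_of_nonneg
      · exact Finset.range_subset_range.2 (Nat.le_add_right _ _)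
      · intro i _ _; positivity
    nlinarith
  have hw0 : w 0 = z 0 / 2 := by simp [hw]
  have hwpos : ∀ t, 0 < w t := by
    intro t
    have h := hwmono 0 t
    rw [Nat.zero_add, hw0] at h
    exact lt_of_lt_of_le (by linarith) h
  have hstep : ∀ t m : ℕ, w t + (m : ℝ) * (A * w t ^ 2) ≤ w (t + m) := by
    intro t m
    induction m with
    | zero => simp
    | succ n ih =>
      have h1 : w (t + (n + 1)) = w (t + n) + A * z (t + n) ^ 2 := by
        have he : t + (n + 1) = (t + n) + 1 := rfl
        simp only [hw, he, Finset.sum_range_succ]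
        ring
      have h2 : w t ≤ w (t + n) := hwmono t n
      have h3 : w (t + n) ≤ z (t + n) := hwz _
      have h4 : w t ^ 2 ≤ z (t + n) ^ 2 := by nlinarith [hwpos t, hwpos (t + n)]
      push_cast
      rw [h1]
      push_cast at ih
      nlinarith
  have main : ∀ k : ℕ, ∃ t : ℕ, (t : ℝ) ≤ (k : ℝ) + (4 / (z 0 * A)) * (1 - (1/2 : ℝ) ^ k) ∧
      2 ^ k * (z 0 / 2) ≤ w t := by
    intro k
    induction k with
    | zero => exact ⟨0, by norm_num, by rw [hw0]; norm_num⟩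
    | succ k ih =>
      obtain ⟨t, ht, hwt⟩ := ih
      set L : ℝ := 2 ^ k * (z 0 / 2) with hL
      have hLpos : 0 < L := by positivity
      set m : ℕ := ⌈1 / (A * L)⌉₊ with hm
      have h1 : 1 / (A * L) ≤ (m : ℝ) := Nat.le_ceil _
      refine ⟨t + m, ?_, ?_⟩
      · have hmle : (m : ℝ) ≤ 1 / (A * L) + 1 := by
          have := Nat.ceil_lt_add_one (by positivity : (0:ℝ) ≤ 1 / (A * L))
          linarith
        have heq : 1 / (A * L) = (4 / (z 0 * A)) * ((1/2 : ℝ) ^ k / 2) := by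
          rw [hL]
          field_simp
          have key : (2:ℝ) ^ k * (1 / 2) ^ k = 1 := by rw [← mul_pow]; norm_num
          linear_combination (-4) * key
        push_cast
        rw [pow_succ]
        rw [heq] at hmle
        linarith
      · have h2 := hstep t m
        have h3 : L ≤ w t := hwt
        have h4 : L ≤ (m : ℝ) * (A * L ^ 2) := by
          have he : (1 / (A * L)) * (A * L ^ 2) = L := by field_simp
          have := mul_le_mul_of_nonneg_right h1 (le_of_lt (by positivity : (0:ℝ) < A * L ^ 2))
          rw [he] at this
          exact this
        have h5 : (m : ℝ) * (A * L ^ 2) ≤ (m : ℝ) * (A * w t ^ 2) := by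
          have hm0 : (0 : ℝ) ≤ (m : ℝ) := Nat.cast_nonneg _
          have hsq : A * L ^ 2 ≤ A * w t ^ 2 := by
            have h6 : 0 ≤ (w t - L) * (w t + L) := mul_nonneg (by linarith) (by linarith)
            nlinarith [h6]
          exact mul_le_mul_of_nonneg_left hsq hm0
        have : 2 ^ (k + 1) * (z 0 / 2) = 2 * L := by rw [hL]; ring
        rw [this]
        linarith
  by_cases hvz : v ≤ z 0
  · refine ⟨0, ?_, hvz⟩
    have h1 : (0:ℝ) ≤ 8 * (⌈Real.log (v / z 0) / Real.log 2⌉₊ : ℝ) := by positivity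
    have h2 : (0:ℝ) < 21 / (z 0 * A) := div_pos (by norm_num) (mul_pos hz0 hA)
    push_cast
    linarith
  push_neg at hvz
  set N : ℕ := ⌈Real.log (v / z 0) / Real.log 2⌉₊ with hN
  have hlog2 : 0 < Real.log 2 := Real.log_pos (by norm_num)
  have hlogv : 0 < Real.log (v / z 0) := Real.log_pos (by rw [lt_div_iff₀ hz0]; linarith)
  have hN1 : 0 < N := by
    rw [hN]
    exact Nat.ceil_pos.2 (div_pos hlogv hlog2)
  obtain ⟨t, ht, hwt⟩ := main (N + 1)
  refine ⟨t, ?_, ?_⟩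
  · have hzA : 0 < z 0 * A := by positivity
    have hhalf : (0 : ℝ) ≤ (1/2 : ℝ) ^ (N + 1) := by positivity
    have h4 : (4 / (z 0 * A)) * (1 - (1/2 : ℝ) ^ (N + 1)) ≤ 4 / (z 0 * A) := by
      have : 0 ≤ 4 / (z 0 * A) := by positivity
      nlinarith
    have h421 : 4 / (z 0 * A) ≤ 21 / (z 0 * A) := by
      rw [div_le_div_iff₀ hzA hzA]
      nlinarith
    have hN1' : (1 : ℝ) ≤ (N : ℝ) := by exact_mod_cast hN1
    push_cast at ht ⊢
    linarith
  · have hNle : Real.log (v / z 0) / Real.log 2 ≤ (N : ℝ) := Nat.le_ceil _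
    have hpow : v / z 0 ≤ 2 ^ N := by
      have h1 : Real.log (v / z 0) ≤ (N : ℝ) * Real.log 2 := by
        rw [div_le_iff₀ hlog2] at hNle
        exact hNle
      have h2 : Real.log (v / z 0) ≤ Real.log ((2 : ℝ) ^ N) := by
        rw [Real.log_pow]
        exact h1
      have hv0 : 0 < v / z 0 := div_pos (lt_trans hz0 hvz) hz0
      exact (Real.log_le_log_iff hv0 (by positivity)).1 h2
    have hvle : v ≤ 2 ^ N * z 0 := by
      rw [div_le_iff₀ hz0] at hpow
      linarith
    have : 2 ^ (N + 1) * (z 0 / 2) = 2 ^ N * z 0 := by ring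
    rw [this] at hwt
    exact le_trans hvle (le_trans hwt (hwz t))
end

section
/- Let $\mathcal{D}$ be a distribution on $\mathbb{R}^D \times \{-1,1\}$ whose support splits into disjoint sets $\mathcal{A}$ (label $+1$) and $\mathcal{B}$ (label $-1$) with $\inf_{a \in \mathcal{A}, b \in \mathcal{B}} \|a - b\|_p > 2\delta$. Let $f_{\text{clean}} : \mathbb{R}^D \to \mathbb{R}$ classify the support correctly ($y f_{\text{clean}}(X) > 0$ on the support), and let $(X_1,y_1),\dots,(X_N,y_N)$ be points of the support. Define $f_{\mathcal{S}}(X) = f_{\text{clean}}(X)\bigl(1 - \mathbb{I}\{X \in \cup_{i=1}^N \mathbb{B}_p(X_i,\delta)\}\bigr) + \sum_{i=1}^N y_i \mathbb{I}\{X \in \mathbb{B}_p(X_i,\delta)\}$. Then: (1) $y f_{\mathcal{S}}(X) > 0$ for every $(X,y)$ in the support of $\mathcal{D}$; (2) for every $i \in [N]$ and every $\xi$ with $\|\xi\|_p \leq \delta$, $y_i f_{\mathcal{S}}(X_i + \xi) > 0$. -/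
/-! The patch overrides `fclean` only on the δ-balls around training points. By the triangle
inequality a point within `δ` of two labelled points forces them to carry the same label, since
differently labelled points are more than `2δ` apart. Hence on every ball all contributing
training labels agree with the true label, and the patched value is that label times the
(positive) number of balls containing the point. -/

open Finset

section Patch

variable {E ι : Type*} [PseudoMetricSpace E] [Fintype ι]

open Classical in
noncomputable def patchedClassifier (f : E → ℝ) (Xs : ι → E) (y : ι → ℝ) (δ : ℝ) (X : E) : ℝ :=
  f X * (1 - if ∃ i, dist X (Xs i) ≤ δ then 1 else 0) +
    ∑ i, y i * (if dist X (Xs i) ≤ δ then 1 else 0)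

theorem patchedClassifier_of_forall_lt {f : E → ℝ} {Xs : ι → E} {y : ι → ℝ} {δ : ℝ} {X : E}
    (h : ∀ i, δ < dist X (Xs i)) : patchedClassifier f Xs y δ X = f X := by
  simp [patchedClassifier, not_le.mpr (h _)]

theorem patchedClassifier_of_labels_eq {f : E → ℝ} {Xs : ι → E} {y : ι → ℝ} {δ c : ℝ} {X : E}
    (hX : ∃ i, dist X (Xs i) ≤ δ) (hy : ∀ i, dist X (Xs i) ≤ δ → y i = c) :
    patchedClassifier f Xs y δ X = #{i | dist X (Xs i) ≤ δ} * c := by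
  classical
  rw [patchedClassifier, if_pos hX, sub_self, mul_zero, zero_add]
  simp_rw [mul_ite, mul_one, mul_zero]
  rw [← sum_filter, sum_congr rfl fun i hi => hy i (mem_filter.mp hi).2, sum_const, nsmul_eq_mul]

theorem pos_mul_patchedClassifier {f : E → ℝ} {Xs : ι → E} {y : ι → ℝ} {δ c : ℝ} {X : E}
    (hc : c ≠ 0) (hy : ∀ i, dist X (Xs i) ≤ δ → y i = c)
    (hf : (∀ i, δ < dist X (Xs i)) → 0 < c * f X) :
    0 < c * patchedClassifier f Xs y δ X := by
  by_cases hX : ∃ i, dist X (Xs i) ≤ δ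
  · obtain ⟨i, hi⟩ := hX
    have hcard : (0 : ℝ) < #{i | dist X (Xs i) ≤ δ} := by
      exact_mod_cast card_pos.mpr ⟨i, by simpa using hi⟩
    rw [patchedClassifier_of_labels_eq ⟨i, hi⟩ hy]
    nlinarith [mul_self_pos.mpr hc]
  · push Not at hX
    rw [patchedClassifier_of_forall_lt hX]
    exact hf hX

end Patch

section Labels

variable {E : Type*} {A B : Set E}

def HasLabel (A B : Set E) (x : E) (c : ℝ) : Prop :=
  (c = 1 ∧ x ∈ A) ∨ (c = -1 ∧ x ∈ B)

theorem HasLabel.ne_zero {x : E} {c : ℝ} (h : HasLabel A B x c) : c ≠ 0 := by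
  rcases h with ⟨rfl, -⟩ | ⟨rfl, -⟩ <;> norm_num

theorem HasLabel.eq_of_dist_le [PseudoMetricSpace E] {δ : ℝ}
    (hsep : ∀ a ∈ A, ∀ b ∈ B, 2 * δ < dist a b) {x a b : E} {c c' : ℝ} (ha : HasLabel A B a c) (hb : HasLabel A B b c') (hxa : dist x a ≤ δ)
    (hxb : dist x b ≤ δ) : c = c' := by
  have hab : dist a b ≤ 2 * δ := by linarith [dist_triangle_left a b x]
  rcases ha with ⟨rfl, haA⟩ | ⟨rfl, haB⟩ <;> rcases hb with ⟨rfl, hbA⟩ | ⟨rfl, hbB⟩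
  · rfl
  · linarith [hsep a haA b hbB]
  · linarith [hsep b hbA a haB, dist_comm a b]
  · rfl

end Labels

open Classical in
theorem cgro_classifier_exists_general
    (D N : ℕ) (p : ENNReal) [Fact (1 ≤ p)] (δ : ℝ)
    (A B : Set (PiLp p (fun _ : Fin D => ℝ)))
    (hsep : ∀ a ∈ A, ∀ b ∈ B, 2 * δ < dist a b)
    (fclean : PiLp p (fun _ : Fin D => ℝ) → ℝ)
    (hcleanA : ∀ X ∈ A, 0 < fclean X) (hcleanB : ∀ X ∈ B, fclean X < 0)
    (Xs : Fin N → PiLp p (fun _ : Fin D => ℝ)) (y : Fin N → ℝ)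
    (hlabel : ∀ i, (y i = 1 ∧ Xs i ∈ A) ∨ (y i = -1 ∧ Xs i ∈ B)) :
    let fS : PiLp p (fun _ : Fin D => ℝ) → ℝ := fun X =>
      fclean X * (1 - if ∃ i, dist X (Xs i) ≤ δ then 1 else 0) +
        ∑ i, y i * (if dist X (Xs i) ≤ δ then 1 else 0)
    (∀ X ∈ A, 0 < fS X) ∧ (∀ X ∈ B, fS X < 0) ∧
      (∀ i : Fin N, ∀ ξ : PiLp p (fun _ : Fin D => ℝ), ‖ξ‖ ≤ δ →
        0 < y i * fS (Xs i + ξ)) := by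
  intro fS
  have hS : fS = patchedClassifier fclean Xs y δ := by
    funext X; simp only [fS, patchedClassifier]; congr
  have hlab : ∀ i, HasLabel A B (Xs i) (y i) := hlabel
  -- `X` itself is the point within `δ` of both `X` and `Xs i`.
  have support_label {X : PiLp p (fun _ : Fin D => ℝ)} {c : ℝ} (hX : HasLabel A B X c) :
      ∀ i, dist X (Xs i) ≤ δ → y i = c := fun i hi =>
    (hlab i).eq_of_dist_le hsep hX hi (dist_self X ▸ dist_nonneg.trans hi)
  refine ⟨fun X hX => ?_, fun X hX => ?_, fun i ξ hξ => ?_⟩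
  · have h := pos_mul_patchedClassifier one_ne_zero (support_label (Or.inl ⟨rfl, hX⟩))
      fun _ => by simpa using hcleanA X hX
    simpa [hS] using h
  · have h := pos_mul_patchedClassifier (by norm_num) (support_label (Or.inr ⟨rfl, hX⟩))
      fun _ => by simpa using hcleanB X hX
    simpa [hS] using h
  · have hξi : dist (Xs i + ξ) (Xs i) ≤ δ := by simpa [dist_eq_norm] using hξ
    rw [hS]
    exact pos_mul_patchedClassifier (hlab i).ne_zero
      (fun j hj => (hlab j).eq_of_dist_le hsep (hlab i) hj hξi)
      fun h => absurd (h i) (not_lt.mpr hξi)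

open Classical in
/-- Existence of a CGRO classifier: given a well-separated support (margin `> 2δ`),
a clean classifier, and training points, the patched classifier `f_S` classifies the
whole support correctly and is robust on the training points. -/
theorem cgro_classifier_exists
    (D N : ℕ) (p : ENNReal) [Fact (1 ≤ p)] (δ : ℝ) (hδ : 0 < δ)
    (A B : Set (PiLp p (fun _ : Fin D => ℝ)))
    (hsep : ∀ a ∈ A, ∀ b ∈ B, 2 * δ < dist a b)
    (fclean : PiLp p (fun _ : Fin D => ℝ) → ℝ)
    (hcleanA : ∀ X ∈ A, 0 < fclean X) (hcleanB : ∀ X ∈ B, fclean X < 0)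
    (Xs : Fin N → PiLp p (fun _ : Fin D => ℝ)) (y : Fin N → ℝ)
    (hlabel : ∀ i, (y i = 1 ∧ Xs i ∈ A) ∨ (y i = -1 ∧ Xs i ∈ B)) :
    let fS : PiLp p (fun _ : Fin D => ℝ) → ℝ := fun X =>
      fclean X * (1 - if ∃ i, dist X (Xs i) ≤ δ then 1 else 0) +
        ∑ i, y i * (if dist X (Xs i) ≤ δ then 1 else 0)
    (∀ X ∈ A, 0 < fS X) ∧ (∀ X ∈ B, fS X < 0) ∧
      (∀ i : Fin N, ∀ ξ : PiLp p (fun _ : Fin D => ℝ), ‖ξ‖ ≤ δ →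
        0 < y i * fS (Xs i + ξ)) :=
  cgro_classifier_exists_general D N p δ A B hsep fclean hcleanA hcleanB Xs y hlabel
end

section
/- For every $\epsilon \in (0,1)$ there exists a function computed by a ReLU network with depth, width, and number of parameters all $O(\log(1/\epsilon))$ that approximates $x \mapsto x^2$ uniformly on $[0,1]$ to accuracy $\epsilon$. -/
/-- The ReLU activation. -/
def relu (x : ℝ) : ℝ := max x 0

/-- A fully-connected ReLU network: `depth` affine layers with ReLU between them
(no ReLU at the output). `widths 0` is the input dimension and `widths depth` the
output dimension. -/
structure MLP where
  depth : ℕ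
  widths : ℕ → ℕ
  weight : (k : ℕ) → Matrix (Fin (widths (k + 1))) (Fin (widths k)) ℝ
  bias : (k : ℕ) → Fin (widths (k + 1)) → ℝ

/-- Activations at layer `k` (input at `k = 0`; ReLU applied to hidden layers). -/
def MLP.forward (n : MLP) : (k : ℕ) → (Fin (n.widths 0) → ℝ) → Fin (n.widths k) → ℝ
  | 0, x => x
  | k + 1, x => (n.weight k).mulVec
      (if k = 0 then n.forward k x else fun i => relu (n.forward k x i)) + n.bias k

/-- The function computed by the network. -/
def MLP.eval (n : MLP) (x : Fin (n.widths 0) → ℝ) : Fin (n.widths n.depth) → ℝ :=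
  n.forward n.depth x

/-- Total number of parameters (weights and biases). -/
def MLP.params (n : MLP) : ℕ :=
  ∑ k ∈ Finset.range n.depth, (n.widths (k + 1) * n.widths k + n.widths (k + 1))

noncomputable def T (t : ℝ) : ℝ := 2 * max t 0 - 4 * max (t - 1/2) 0

noncomputable def g : ℕ → ℝ → ℝ
  | 0, x => x
  | n+1, x => T (g n x)

noncomputable def yy : ℕ → ℝ → ℝ
  | 0, x => x
  | n+1, x => yy n x - g (n+1) x / 4 ^ (n+1)

lemma g_mem {x : ℝ} (h0 : 0 ≤ x) (h1 : x ≤ 1) :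
    ∀ n, 0 ≤ g n x ∧ g n x ≤ 1 := by
  intro n
  induction n with
  | zero => exact ⟨h0, h1⟩
  | succ n ih =>
    obtain ⟨ha, hb⟩ := ih
    simp only [g, T]
    rcases le_total (g n x) (1/2) with h | h
    · rw [max_eq_left ha, max_eq_right (by linarith)]
      constructor <;> linarith
    · rw [max_eq_left ha, max_eq_left (by linarith)]
      constructor <;> linarith

lemma yy_eq {x : ℝ} (h0 : 0 ≤ x) (h1 : x ≤ 1) :
    ∀ n, yy n x = x ^ 2 + g n x * (1 - g n x) / 4 ^ n := by
  intro n
  induction n with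
  | zero => simp [yy, g]; ring
  | succ n ih =>
    obtain ⟨ha, hb⟩ := g_mem h0 h1 n
    have h4 : (4:ℝ) ^ (n+1) = 4 * 4 ^ n := by ring
    have h4p : (0:ℝ) < 4 ^ n := by positivity
    simp only [yy, ih, g, T, max_eq_left ha]
    rcases le_total (g n x) (1/2) with h | h
    · rw [max_eq_right (by linarith)]
      field_simp
      ring
    · rw [max_eq_left (by linarith)]
      field_simp
      ring

lemma yy_nonneg {x : ℝ} (h0 : 0 ≤ x) (h1 : x ≤ 1) (n : ℕ) : 0 ≤ yy n x := by
  obtain ⟨ha, hb⟩ := g_mem h0 h1 n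
  rw [yy_eq h0 h1 n]
  have h4p : (0:ℝ) < 4 ^ n := by positivity
  have hg : (0:ℝ) ≤ g n x * (1 - g n x) := mul_nonneg ha (by linarith)
  have := div_nonneg hg h4p.le
  nlinarith [sq_nonneg x]

lemma yy_err {x : ℝ} (h0 : 0 ≤ x) (h1 : x ≤ 1) (n : ℕ) :
    |yy n x - x ^ 2| ≤ (1/4) ^ n := by
  obtain ⟨ha, hb⟩ := g_mem h0 h1 n
  rw [yy_eq h0 h1 n]
  have h4p : (0:ℝ) < 4 ^ n := by positivity
  have hg : (0:ℝ) ≤ g n x * (1 - g n x) := mul_nonneg ha (by linarith)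
  have hg1 : g n x * (1 - g n x) ≤ 1 := by nlinarith
  have h14 : ((1:ℝ)/4) ^ n = 1 / 4 ^ n := by rw [div_pow]; norm_num
  rw [show x ^ 2 + g n x * (1 - g n x) / 4 ^ n - x ^ 2 = g n x * (1 - g n x) / 4 ^ n by ring,
    abs_of_nonneg (div_nonneg hg h4p.le), h14]
  gcongr


/-- The Yarotsky network with K sawtooth stages. -/
noncomputable def ynet (K : ℕ) : MLP where
  depth := K + 1
  widths := fun j => if 1 ≤ j ∧ j ≤ K then 3 else 1
  weight := fun k => Matrix.of fun i l =>
    if k = 0 then 1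
    else if k < K ∧ (i.1 = 0 ∨ i.1 = 1) then
      (if l.1 = 0 then 2 else if l.1 = 1 then -4 else 0)
    else (if l.1 = 0 then -2/4^k else if l.1 = 1 then 4/4^k else 1)
  bias := fun k i => if k < K ∧ i.1 = 1 then -1/2 else 0

lemma ynet_w0 (K : ℕ) : (ynet K).widths 0 = 1 := by simp [ynet]

lemma ynet_wtop (K : ℕ) : (ynet K).widths (K + 1) = 1 := by simp [ynet]

lemma ynet_w_le (K j : ℕ) : (ynet K).widths j ≤ 3 := by
  simp only [ynet]; split <;> norm_num

lemma sum_fin_w1 {n : ℕ} (h : n = 1) (f : Fin n → ℝ) (a : ℝ)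
    (hf : ∀ l : Fin n, f l = a) : ∑ l, f l = a := by
  subst h
  rw [Fin.sum_univ_one, hf 0]

lemma sum_fin_w3 {n : ℕ} (h : n = 3) (f : Fin n → ℝ) (a b c : ℝ)
    (hf : ∀ l : Fin n, f l = if l.1 = 0 then a else if l.1 = 1 then b else c) :
    ∑ l, f l = a + b + c := by
  subst h
  rw [Fin.sum_univ_three, hf 0, hf 1, hf 2]
  norm_num

lemma ynet_w3 {K j : ℕ} (h1 : 1 ≤ j) (h2 : j ≤ K) : (ynet K).widths j = 3 := by
  simp [ynet, h1, h2]

lemma ynet_forward (K : ℕ) (x : ℝ) (h0 : 0 ≤ x) (h1 : x ≤ 1) :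
    ∀ j, 1 ≤ j → j ≤ K → ∀ i : Fin ((ynet K).widths j),
      (ynet K).forward j (fun _ => x) i =
        if i.1 = 0 then g (j-1) x else if i.1 = 1 then g (j-1) x - 1/2
          else yy (j-1) x := by
  intro j
  induction j with
  | zero => omega
  | succ j ih =>
    intro _ hjK i
    have hK1 : 1 ≤ K := le_trans (by omega) hjK
    have hb : (ynet K).bias j i = if j < K ∧ i.1 = 1 then (-1/2 : ℝ) else 0 := rfl
    rcases Nat.eq_zero_or_pos j with rfl | hjpos
    · -- first hidden layer
      have hfw : (ynet K).forward 1 (fun _ => x) i =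
          (∑ l : Fin ((ynet K).widths 0), (ynet K).weight 0 i l * x)
            + (ynet K).bias 0 i := by
        simp only [MLP.forward, if_pos rfl, Pi.add_apply, Matrix.mulVec,
          dotProduct, if_true]
      have key : ∑ l : Fin ((ynet K).widths 0), (ynet K).weight 0 i l * x = x := by
        refine sum_fin_w1 (ynet_w0 K) _ x fun l => ?_
        have hw : (ynet K).weight 0 i l = 1 := rfl
        rw [hw, one_mul]
      rw [hfw, key, hb]
      simp only [show (0+1-1 : ℕ) = 0 from rfl, g, yy]
      split_ifs <;> (first | ring1 | omega | (exfalso; omega))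
    · -- inductive layers
      have hj1 : 1 ≤ j := hjpos
      have hjK' : j ≤ K := by omega
      have hjltK : j < K := by omega
      have hw3 : (ynet K).widths j = 3 := ynet_w3 hj1 hjK'
      have ih' := ih hj1 hjK'
      obtain ⟨hga, hgb⟩ := g_mem h0 h1 (j-1)
      have hyn : 0 ≤ yy (j-1) x := yy_nonneg h0 h1 (j-1)
      have hrelu : ∀ l : Fin ((ynet K).widths j),
          relu ((ynet K).forward j (fun _ => x) l) =
            if l.1 = 0 then g (j-1) x else if l.1 = 1 then max (g (j-1) x - 1/2) 0
              else yy (j-1) x := by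
        intro l
        rw [ih' l]
        split_ifs with hA hB
        · exact max_eq_left hga
        · rfl
        · exact max_eq_left hyn
      have hweight : ∀ l : Fin ((ynet K).widths j), (ynet K).weight j i l =
          if j < K ∧ (i.1 = 0 ∨ i.1 = 1) then
            (if l.1 = 0 then 2 else if l.1 = 1 then -4 else 0)
          else (if l.1 = 0 then -2/4^j else if l.1 = 1 then (4:ℝ)/4^j else 1) := by
        intro l
        show (if j = 0 then _ else _) = _
        rw [if_neg (by omega : ¬ j = 0)]
      have hfw : (ynet K).forward (j+1) (fun _ => x) i =
          (∑ l : Fin ((ynet K).widths j),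
            (ynet K).weight j i l * relu ((ynet K).forward j (fun _ => x) l))
            + (ynet K).bias j i := by
        simp only [MLP.forward, if_neg (by omega : ¬ j = 0), Pi.add_apply,
          Matrix.mulVec, dotProduct]
      have hg' : g j x = 2 * g (j-1) x - 4 * max (g (j-1) x - 1/2) 0 := by
        calc g j x = g ((j-1)+1) x := by rw [Nat.sub_add_cancel hj1]
          _ = T (g (j-1) x) := rfl
          _ = 2 * g (j-1) x - 4 * max (g (j-1) x - 1/2) 0 := by
              rw [T, max_eq_left hga]
      have hy' : yy j x = yy (j-1) x - g j x / 4 ^ j := by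
        have h2 : yy ((j-1)+1) x = yy (j-1) x - g ((j-1)+1) x / 4 ^ ((j-1)+1) := rfl
        calc yy j x = yy ((j-1)+1) x := by rw [show (j-1)+1 = j by omega]
          _ = yy (j-1) x - g ((j-1)+1) x / 4 ^ ((j-1)+1) := h2
          _ = yy (j-1) x - g j x / 4 ^ j := by rw [show (j-1)+1 = j by omega]
      rw [hfw, show (j+1)-1 = j by omega]
      by_cases hI0 : i.1 = 0
      · rw [sum_fin_w3 hw3 _ (2 * g (j-1) x) (-4 * max (g (j-1) x - 1/2) 0) 0
          (fun l => by rw [hweight l, hrelu l, if_pos ⟨hjltK, Or.inl hI0⟩]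
                       split_ifs <;> ring),
          hb, hg']
        split_ifs <;> (first | ring1 | omega | (exfalso; omega))
      · by_cases hI1 : i.1 = 1
        · rw [sum_fin_w3 hw3 _ (2 * g (j-1) x) (-4 * max (g (j-1) x - 1/2) 0) 0
            (fun l => by rw [hweight l, hrelu l, if_pos ⟨hjltK, Or.inr hI1⟩]
                         split_ifs <;> ring),
            hb, hg']
          split_ifs <;> (first | ring1 | omega | (exfalso; omega))
        · rw [sum_fin_w3 hw3 _ (-2/4^j * g (j-1) x)
            ((4:ℝ)/4^j * max (g (j-1) x - 1/2) 0) (yy (j-1) x)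
            (fun l => by rw [hweight l, hrelu l,
                           if_neg (by tauto : ¬ (j < K ∧ (i.1 = 0 ∨ i.1 = 1)))]
                         split_ifs <;> ring),
            hb, hy', hg']
          split_ifs <;> (first | ring1 | omega | (exfalso; omega))

lemma ynet_eval (K : ℕ) (hK : 1 ≤ K) (x : ℝ) (h0 : 0 ≤ x) (h1 : x ≤ 1)
    (i : Fin ((ynet K).widths (ynet K).depth)) :
    (ynet K).eval (fun _ => x) i = yy K x := by
  have hw3 : (ynet K).widths K = 3 := ynet_w3 hK le_rfl
  obtain ⟨hga, hgb⟩ := g_mem h0 h1 (K-1)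
  have hyn : 0 ≤ yy (K-1) x := yy_nonneg h0 h1 (K-1)
  have ih' := ynet_forward K x h0 h1 K hK le_rfl
  have hrelu : ∀ l : Fin ((ynet K).widths K),
      relu ((ynet K).forward K (fun _ => x) l) =
        if l.1 = 0 then g (K-1) x else if l.1 = 1 then max (g (K-1) x - 1/2) 0
          else yy (K-1) x := by
    intro l
    rw [ih' l]
    split_ifs with hA hB
    · exact max_eq_left hga
    · rfl
    · exact max_eq_left hyn
  have hweight : ∀ l : Fin ((ynet K).widths K), (ynet K).weight K i l =
      (if l.1 = 0 then -2/4^K else if l.1 = 1 then (4:ℝ)/4^K else 1) := by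
    intro l
    show (if K = 0 then _ else _) = _
    rw [if_neg (by omega : ¬ K = 0)]
    exact if_neg (by simp)
  have hb : (ynet K).bias K i = 0 := by
    show (if K < K ∧ i.1 = 1 then (-1/2:ℝ) else 0) = 0
    rw [if_neg (by simp)]
  have hfw : (ynet K).eval (fun _ => x) i =
      (∑ l : Fin ((ynet K).widths K),
        (ynet K).weight K i l * relu ((ynet K).forward K (fun _ => x) l))
        + (ynet K).bias K i := by
    show (ynet K).forward (K+1) (fun _ => x) i = _
    simp only [MLP.forward, if_neg (by omega : ¬ K = 0), Pi.add_apply,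
      Matrix.mulVec, dotProduct]
    rfl
  have hg' : g K x = 2 * g (K-1) x - 4 * max (g (K-1) x - 1/2) 0 := by
    calc g K x = g ((K-1)+1) x := by rw [Nat.sub_add_cancel hK]
      _ = T (g (K-1) x) := rfl
      _ = _ := by rw [T, max_eq_left hga]
  have hy' : yy K x = yy (K-1) x - g K x / 4 ^ K := by
    calc yy K x = yy ((K-1)+1) x := by rw [Nat.sub_add_cancel hK]
      _ = yy (K-1) x - g ((K-1)+1) x / 4 ^ ((K-1)+1) := rfl
      _ = _ := by rw [Nat.sub_add_cancel hK]
  rw [hfw, sum_fin_w3 hw3 _ (-2/4^K * g (K-1) x)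
      ((4:ℝ)/4^K * max (g (K-1) x - 1/2) 0) (yy (K-1) x)
      (fun l => by rw [hweight l, hrelu l]; split_ifs <;> ring),
    hb, hy', hg']
  ring

/-- Yarotsky: `x ↦ x²` on `[0,1]` is approximable to accuracy `ε` by a ReLU network
whose depth, widths and number of parameters are all `O(log(1/ε))`. -/
theorem relu_approx_square :
    ∃ Cc : ℝ, 0 < Cc ∧ ∀ ε : ℝ, 0 < ε → ε < 1 →
      ∃ net : MLP, net.widths 0 = 1 ∧ net.widths net.depth = 1 ∧
        (net.depth : ℝ) ≤ Cc * (1 + Real.log (1 / ε)) ∧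
        (∀ k ≤ net.depth, (net.widths k : ℝ) ≤ Cc * (1 + Real.log (1 / ε))) ∧
        (net.params : ℝ) ≤ Cc * (1 + Real.log (1 / ε)) ∧
        ∀ x : ℝ, 0 ≤ x → x ≤ 1 →
          ∀ i : Fin (net.widths net.depth),
            |net.eval (fun _ => x) i - x ^ 2| ≤ ε := by
  refine ⟨100, by norm_num, fun ε hε0 hε1 => ?_⟩
  set L := Real.log (1/ε) with hLdef
  have hL : 0 < L := Real.log_pos (by rw [lt_div_iff₀ hε0]; linarith)
  have hlog4 : (1:ℝ) < Real.log 4 := by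
    have h2 := Real.log_two_gt_d9
    rw [show (4:ℝ) = 2^2 by norm_num, Real.log_pow]
    push_cast
    nlinarith
  set K := ⌈L / Real.log 4⌉₊ with hKdef
  have hK1 : 1 ≤ K := Nat.ceil_pos.mpr (div_pos hL (by linarith))
  have hKup : (K:ℝ) ≤ L + 1 := by
    have h := Nat.ceil_lt_add_one (show (0:ℝ) ≤ L / Real.log 4 by positivity)
    have hdiv : L / Real.log 4 ≤ L := by
      rw [div_le_iff₀ (by linarith)]
      nlinarith
    rw [← hKdef] at h
    linarith
  have hKlow : L ≤ (K:ℝ) * Real.log 4 := by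
    have h := Nat.le_ceil (L / Real.log 4)
    rw [← hKdef] at h
    calc L = L / Real.log 4 * Real.log 4 := by field_simp
      _ ≤ (K:ℝ) * Real.log 4 := by nlinarith
  have hεK : (1/4 : ℝ)^K ≤ ε := by
    have h1 : ((1:ℝ)/4)^K = Real.exp ((K:ℝ) * Real.log (1/4)) := by
      rw [← Real.log_pow, Real.exp_log (by positivity)]
    have h2 : Real.log (1/4 : ℝ) = - Real.log 4 := by
      rw [one_div, Real.log_inv]
    have h3 : Real.log ε = -L := by rw [hLdef, one_div, Real.log_inv, neg_neg]
    rw [h1, h2, ← Real.exp_log hε0]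
    apply Real.exp_le_exp.mpr
    rw [h3]
    nlinarith
  refine ⟨ynet K, ynet_w0 K, ynet_wtop K, ?_, ?_, ?_, ?_⟩
  · show ((K + 1 : ℕ) : ℝ) ≤ 100 * (1 + L)
    push_cast
    nlinarith
  · intro k _
    have h := ynet_w_le K k
    have h3 : ((ynet K).widths k : ℝ) ≤ 3 := by exact_mod_cast h
    nlinarith
  · have hp : (ynet K).params ≤ 12 * (K+1) := by
      rw [MLP.params]
      calc ∑ k ∈ Finset.range ((ynet K).depth),
            ((ynet K).widths (k + 1) * (ynet K).widths k + (ynet K).widths (k + 1))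
          ≤ ∑ _k ∈ Finset.range ((ynet K).depth), 12 := by
            refine Finset.sum_le_sum fun k _ => ?_
            have h1 := ynet_w_le K (k+1)
            have h2 := ynet_w_le K k
            nlinarith
        _ = 12 * (K+1) := by
            rw [Finset.sum_const, Finset.card_range]
            show (K+1) * 12 = 12 * (K+1)
            ring
    have hp' : ((ynet K).params : ℝ) ≤ 12 * ((K:ℝ)+1) := by exact_mod_cast hp
    nlinarith
  · intro x hx0 hx1 i
    rw [ynet_eval K hK1 x hx0 hx1 i]
    exact (yy_err hx0 hx1 K).trans hεK
end
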